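/- For every j ∈ ℕ_{>0}, every x ∈ ℝ and every t ∈ [0,T], one has sup_{k ∈ Γ̃_m} |m_j(x,t,k)| ≤ M^{-j}. -/

import Mathlib

open MeasureTheory Filter Topology

noncomputable section

namespace Paper

/-- Iterated logarithm: `iterLog r` is the `r`-th iterate of `Real.log`. -/
def iterLog : ℕ → ℝ → ℝ
  | 0, s => s
  | r + 1, s => Real.log (iterLog r s)

/-- `LOG(s; r⃗, a⃗, σ) = (-1)^σ ∏_j (log_{r_j} s)^{a_j}` (empty product convention for `p = 0`). -/
def LOG {p : ℕ} (r : Fin p → ℕ) (a : Fin p → ℝ) (σ : ℕ) (s : ℝ) : ℝ :=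
  (-1 : ℝ) ^ σ * ∏ j : Fin p, iterLog (r j) s ^ a j

/-- `f(t) ≍ g(t)` as `t → T⁻`: there are `T₀ ∈ (0,T)` and `c₁, c₂ > 0` with
`c₁ g(t) ≤ f(t) ≤ c₂ g(t)` for all `t ∈ [T₀, T)`. -/
def AsympTo (T : ℝ) (f g : ℝ → ℝ) : Prop :=
  ∃ T₀ ∈ Set.Ioo (0 : ℝ) T, ∃ c₁ > (0 : ℝ), ∃ c₂ > (0 : ℝ),
    ∀ t ∈ Set.Ico T₀ T, c₁ * g t ≤ f t ∧ f t ≤ c₂ * g t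

/-- Partial derivative in `x`. -/
def px (u : ℝ → ℝ → ℝ) : ℝ → ℝ → ℝ := fun x t => deriv (fun x' => u x' t) x

/-- Partial derivative in `t`. -/
def pt (u : ℝ → ℝ → ℝ) : ℝ → ℝ → ℝ := fun x t => deriv (fun t' => u x t') t

/-- Mixed partial derivative `∂_x^{q₁} ∂_t^{q₂}` for real-valued functions. -/
def pdR (q₁ q₂ : ℕ) (u : ℝ → ℝ → ℝ) : ℝ → ℝ → ℝ :=
  fun x t => iteratedDeriv q₁ (fun x' => iteratedDeriv q₂ (fun t' => u x' t') t) x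

/-- Mixed partial derivative `∂_x^{q₁} ∂_t^{q₂}` for complex-valued functions. -/
def pdC (q₁ q₂ : ℕ) (g : ℝ → ℝ → ℂ) : ℝ → ℝ → ℂ :=
  fun x t => iteratedDeriv q₁ (fun x' => iteratedDeriv q₂ (fun t' => g x' t') t) x

/-- Schwartz class solution of the "bad" Boussinesq equation
`u_tt = u_xx + (u²)_xx + u_xxxx` on `ℝ × [0,T)`. -/
def IsSchwartzSolution (T : ℝ) (u : ℝ → ℝ → ℝ) : Prop :=
  ContDiffOn ℝ (⊤ : ℕ∞) (fun q : ℝ × ℝ => u q.1 q.2) (Set.univ ×ˢ Set.Ico 0 T) ∧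
  (∀ x : ℝ, ∀ t ∈ Set.Ico (0 : ℝ) T,
      pt (pt u) x t =
        px (px u) x t + px (px fun x' t' => u x' t' ^ 2) x t + px (px (px (px u))) x t) ∧
  (∀ N : ℕ, 1 ≤ N → ∀ τ ∈ Set.Ico (0 : ℝ) T, ∃ B : ℝ, ∀ x : ℝ, ∀ t ∈ Set.Icc (0 : ℝ) τ,
      ∑ i ∈ Finset.range (N + 1), (1 + |x|) ^ N * |iteratedDeriv i (fun x' => u x' t) x| ≤ B)

/-- `ω = e^{2πi/3}`. -/
def ω : ℂ := Complex.exp (2 * Real.pi * Complex.I / 3)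

/-- `e₁ = e^{-iπ/6}`. -/
def e₁ : ℂ := Complex.exp (-(Real.pi / 6) * Complex.I)

/-- `e₂ = e^{5iπ/6}`. -/
def e₂ : ℂ := Complex.exp (5 * Real.pi / 6 * Complex.I)

/-- `e₃ = e^{iπ/6}`. -/
def e₃ : ℂ := Complex.exp (Real.pi / 6 * Complex.I)

/-- `e₄ = e^{7iπ/6}`. -/
def e₄ : ℂ := Complex.exp (7 * Real.pi / 6 * Complex.I)

/-- Contour integral over `Γ̃ = {r e^{-iπ/6} : r > 1} ∪ {r e^{5iπ/6} : r > 1}`,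
each ray oriented in the direction of increasing modulus. -/
def contourInt (g : ℂ → ℂ) : ℂ :=
  (∫ r in Set.Ioi (1 : ℝ), g ((r : ℂ) * e₁)) * e₁ +
  (∫ r in Set.Ioi (1 : ℝ), g ((r : ℂ) * e₂)) * e₂

/-- The contour `Γ̃` as a set. -/
def Gammat : Set ℂ :=
  {k : ℂ | ∃ r : ℝ, 1 < r ∧ k = (r : ℂ) * e₁} ∪ {k : ℂ | ∃ r : ℝ, 1 < r ∧ k = (r : ℂ) * e₂}

/-- `Γ̃_m = Γ̃ ∩ {k : |k| > 2}`. -/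
def GammatM : Set ℂ := Gammat ∩ {k : ℂ | 2 < ‖k‖}

/-- The set `S`: the closure of
`{r e^{iπ/6} : r > 1} ∪ {r e^{7iπ/6} : r > 1} ∪ {r e^{5iπ/6} : 0 < r < 1} ∪ {r e^{-iπ/6} : 0 < r < 1}`. -/
def Sset : Set ℂ :=
  closure ({k : ℂ | ∃ r : ℝ, 1 < r ∧ k = (r : ℂ) * e₃} ∪
    {k : ℂ | ∃ r : ℝ, 1 < r ∧ k = (r : ℂ) * e₄} ∪
    {k : ℂ | ∃ r : ℝ, 0 < r ∧ r < 1 ∧ k = (r : ℂ) * e₂} ∪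
    {k : ℂ | ∃ r : ℝ, 0 < r ∧ r < 1 ∧ k = (r : ℂ) * e₁})

/-- `r̃(k) = (ω² - k²)/(1 - ω²k²)`. -/
def rtilde (k : ℂ) : ℂ := (ω ^ 2 - k ^ 2) / (1 - ω ^ 2 * k ^ 2)

/-- `f̃₀`: equals `f₂(k) = r̃(k) conj(f₁(1/conj k))` on the upper ray `(i, i∞)`
and `f₁(1/k)` on the lower ray `(-i, -i∞)`. -/
def ftilde0 (f₁ : ℂ → ℂ) (k : ℂ) : ℂ :=
  if 0 < k.im then rtilde k * starRingEnd ℂ (f₁ (1 / starRingEnd ℂ k)) else f₁ (1 / k)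

/-- The kernel `F(x,t,k,k₁)`. -/
def Fker (x₀ T : ℝ) (f₁ : ℂ → ℂ) (x t : ℝ) (k k₁ : ℂ) : ℂ :=
  Complex.exp (((x - x₀ : ℝ) : ℂ) / 2 * (ω * k₁)) *
  Complex.exp (((T - t : ℝ) : ℂ) / 4 * (ω * k₁) ^ 2) *
  (ω ^ 2 / (ω ^ 2 * k₁ - k) - ω / k₁ ^ 2 / (1 / (ω ^ 2 * k₁) - k)) *
  (ftilde0 f₁ (ω * k₁) *
    Complex.exp (-((x : ℂ) / 2) * (1 / (ω * k₁)) + (t : ℂ) / 4 * (1 / (ω * k₁)) ^ 2) /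
    (2 * (Real.pi : ℂ) * Complex.I))

/-- Iterated kernels: `mSeq F j` is `m_j`, with `mSeq F 0 ≡ 1` and
`m_{j+1}(k) = ∫_{Γ̃} F(k,k₁) m_j(k₁) dk₁`. -/
def mSeq (F : ℂ → ℂ → ℂ) : ℕ → ℂ → ℂ
  | 0 => fun _ => 1
  | j + 1 => fun k => contourInt fun k₁ => F k k₁ * mSeq F j k₁

/-- `m(x,t,k) = 1 + Σ_{j=1}^∞ m_j(x,t,k)`. -/
def mFun (x₀ T : ℝ) (f₁ : ℂ → ℂ) (x t : ℝ) (k : ℂ) : ℂ :=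
  1 + ∑' j : ℕ, mSeq (Fker x₀ T f₁ x t) (j + 1) k

/-- `F^{(1)}(x,t,k₁)`. -/
def F1ker (x₀ T : ℝ) (f₁ : ℂ → ℂ) (x t : ℝ) (k₁ : ℂ) : ℂ :=
  -(Complex.exp (((x - x₀ : ℝ) : ℂ) / 2 * (ω * k₁)) *
    Complex.exp (((T - t : ℝ) : ℂ) / 4 * (ω * k₁) ^ 2) *
    Complex.exp (-((x : ℂ) / 2) * (1 / (ω * k₁)) + (t : ℂ) / 4 * (1 / (ω * k₁)) ^ 2) *
    (ftilde0 f₁ (ω * k₁) / (2 * (Real.pi : ℂ) * Complex.I)) * (ω ^ 2 - ω / k₁ ^ 2))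

/-- `m1Seq x₀ T f₁ x t j = m_{j+1}^{(1)}(x,t)`, i.e. `m_j^{(1)} = m1Seq … (j-1)` for `j ≥ 1`. -/
def m1Seq (x₀ T : ℝ) (f₁ : ℂ → ℂ) (x t : ℝ) (j : ℕ) : ℂ :=
  contourInt fun k₁ => F1ker x₀ T f₁ x t k₁ * mSeq (Fker x₀ T f₁ x t) j k₁

end Paper

open Paper

/-!
Write `Γ̃ = {s e^{-iπ/6} : |s| > 1}`; then `ω k₁ = s i` is purely imaginary, so for `0 ≤ t ≤ T`
the exponential factors of `F(k, k₁)` have modulus at most `1`, and `|r̃(s i)| = 1` gives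
`|f̃₀(s i)| ≤ |f₁(i/|s|)|`. The imaginary part of `ω² k₁ - k` is `-(√3/2) s`, which keeps the Cauchy
factor of size `O(1/|k₁|)` uniformly in `k`. Altogether `|F(k, k₁)| ≤ |f₁(i/|k₁|)| / (2|k₁|)` for
`k, k₁ ∈ Γ̃_m`, while `F(k, k₁) = 0` for `|k₁| ≤ 2` because `f₁` vanishes on `[i/2, i]`. Hence each
integration over the two rays of `Γ̃` multiplies the bound by `∫₁^∞ |f₁(i/y)|/y dy ≤ 1/M`.
-/

namespace Paper

open Complex Set

lemma omega_eq_exp : ω = exp ((2 * Real.pi / 3 : ℝ) * I) := by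
  rw [ω]; push_cast; ring_nf

lemma e₁_eq_exp : e₁ = exp ((-(Real.pi / 6) : ℝ) * I) := by
  rw [e₁]; push_cast; ring_nf

lemma omega_re : ω.re = -(1 / 2) := by
  rw [omega_eq_exp, exp_ofReal_mul_I_re, show 2 * Real.pi / 3 = Real.pi - Real.pi / 3 by ring,
    Real.cos_pi_sub, Real.cos_pi_div_three]

lemma omega_im : ω.im = √3 / 2 := by
  rw [omega_eq_exp, exp_ofReal_mul_I_im, show 2 * Real.pi / 3 = Real.pi - Real.pi / 3 by ring,
    Real.sin_pi_sub, Real.sin_pi_div_three]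

lemma e₁_re : e₁.re = √3 / 2 := by
  rw [e₁_eq_exp, exp_ofReal_mul_I_re, Real.cos_neg, Real.cos_pi_div_six]

lemma e₁_im : e₁.im = -(1 / 2) := by
  rw [e₁_eq_exp, exp_ofReal_mul_I_im, Real.sin_neg, Real.sin_pi_div_six]

lemma norm_omega : ‖ω‖ = 1 := by
  rw [omega_eq_exp, norm_exp_ofReal_mul_I]

lemma norm_e₁ : ‖e₁‖ = 1 := by
  rw [e₁_eq_exp, norm_exp_ofReal_mul_I]

lemma e₂_eq_neg_e₁ : e₂ = -e₁ := by
  rw [e₂, e₁, show 5 * (Real.pi : ℂ) / 6 * I = -(Real.pi / 6) * I + Real.pi * I by ring,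
    exp_add, exp_pi_mul_I, mul_neg_one]

lemma omega_mul_e₁ : ω * e₁ = I := by
  have h3 := Real.mul_self_sqrt (show (0 : ℝ) ≤ 3 by norm_num)
  apply Complex.ext <;> simp [mul_re, mul_im, omega_re, omega_im, e₁_re, e₁_im] <;> linarith

lemma omega_sq_re : (ω ^ 2).re = -(1 / 2) := by
  have h3 := Real.mul_self_sqrt (show (0 : ℝ) ≤ 3 by norm_num)
  simp [sq, mul_re, omega_re, omega_im]; linarith

lemma omega_sq_im : (ω ^ 2).im = -(√3 / 2) := by
  simp [sq, mul_im, omega_re, omega_im]; ring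

lemma norm_ofReal_mul_e₁ (s : ℝ) : ‖(s : ℂ) * e₁‖ = |s| := by
  rw [norm_mul, norm_e₁, mul_one, norm_real, Real.norm_eq_abs]

lemma omega_mul_ofReal_mul_e₁ (s : ℝ) : ω * ((s : ℂ) * e₁) = s * I := by
  rw [mul_left_comm, omega_mul_e₁]

lemma mem_Gammat_iff {k : ℂ} : k ∈ Gammat ↔ ∃ s : ℝ, 1 < |s| ∧ k = s * e₁ := by
  constructor
  · rintro (⟨r, hr, rfl⟩ | ⟨r, hr, rfl⟩)
    · exact ⟨r, by rwa [abs_of_pos (by linarith)], rfl⟩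
    · exact ⟨-r, by rwa [abs_neg, abs_of_pos (by linarith)], by rw [e₂_eq_neg_e₁]; push_cast; ring⟩
  · rintro ⟨s, hs, rfl⟩
    rcases le_or_gt 0 s with h | h
    · exact Or.inl ⟨s, by rwa [abs_of_nonneg h] at hs, rfl⟩
    · refine Or.inr ⟨-s, by rwa [abs_of_neg h] at hs, ?_⟩
      rw [e₂_eq_neg_e₁]; push_cast; ring

lemma mem_GammatM_iff {k : ℂ} : k ∈ GammatM ↔ ∃ s : ℝ, 2 < |s| ∧ k = s * e₁ := by
  simp only [GammatM, mem_inter_iff, mem_Gammat_iff, mem_ofPred_eq]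
  constructor
  · rintro ⟨⟨s, -, rfl⟩, hk⟩
    exact ⟨s, by rwa [norm_ofReal_mul_e₁] at hk, rfl⟩
  · rintro ⟨s, hs, rfl⟩
    exact ⟨⟨s, by linarith, rfl⟩, by rwa [norm_ofReal_mul_e₁]⟩

lemma norm_contourInt_le {g : ℂ → ℂ} {b : ℝ → ℝ} (hb : IntegrableOn b (Ioi 1))
    (hg : ∀ s : ℝ, 1 < |s| → ‖g (s * e₁)‖ ≤ b |s|) :
    ‖contourInt g‖ ≤ 2 * ∫ r in Ioi 1, b r := by
  have ray : ∀ ε : ℝ, |ε| = 1 →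
      ‖∫ r in Ioi (1 : ℝ), g (r * (ε * e₁))‖ ≤ ∫ r in Ioi 1, b r := by
    intro ε hε
    refine norm_integral_le_of_norm_le hb ((ae_restrict_iff' measurableSet_Ioi).2 (.of_forall ?_))
    intro r (hr : 1 < r)
    have := hg (r * ε) (by rwa [abs_mul, hε, mul_one, abs_of_pos (by linarith)])
    rwa [abs_mul, hε, mul_one, abs_of_pos (by linarith), ofReal_mul, mul_assoc] at this
  have h₁ := ray 1 abs_one
  have h₂ := ray (-1) (by simp)
  simp only [ofReal_one, one_mul, ofReal_neg, neg_one_mul, ← e₂_eq_neg_e₁] at h₁ h₂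
  rw [contourInt, two_mul]
  refine (norm_add_le _ _).trans (add_le_add ?_ ?_)
  · rwa [norm_mul, norm_e₁, mul_one]
  · rwa [norm_mul, e₂_eq_neg_e₁, norm_neg, norm_e₁, mul_one, ← e₂_eq_neg_e₁]

lemma norm_mSeq_le {F : ℂ → ℂ → ℂ} {b : ℝ → ℝ} (hb : IntegrableOn b (Ioi 1))
    (hb₀ : ∀ r > 1, 0 ≤ b r)
    (hF : ∀ k ∈ GammatM, ∀ s : ℝ, 2 < |s| → ‖F k (s * e₁)‖ ≤ b |s|)
    (hF₀ : ∀ k (s : ℝ), 1 < |s| → |s| ≤ 2 → F k (s * e₁) = 0) :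
    ∀ j, ∀ k ∈ GammatM, ‖mSeq F j k‖ ≤ (2 * ∫ r in Ioi 1, b r) ^ j := by
  have hC : 0 ≤ 2 * ∫ r in Ioi 1, b r :=
    mul_nonneg zero_le_two (setIntegral_nonneg measurableSet_Ioi hb₀)
  intro j
  induction j with
  | zero => simp [mSeq]
  | succ n ih =>
    intro k hk
    calc ‖mSeq F (n + 1) k‖ ≤ 2 * ∫ r in Ioi 1, b r * (2 * ∫ r in Ioi 1, b r) ^ n := by
          refine norm_contourInt_le (hb.mul_const _) fun s hs => ?_
          rw [norm_mul]
          rcases le_or_gt |s| 2 with hs₂ | hs₂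
          · rw [hF₀ k s hs hs₂, norm_zero, zero_mul]
            exact mul_nonneg (hb₀ _ hs) (pow_nonneg hC n)
          · exact mul_le_mul (hF k hk s hs₂) (ih _ (mem_GammatM_iff.2 ⟨s, hs₂, rfl⟩))
              (norm_nonneg _) (hb₀ _ hs)
      _ = (2 * ∫ r in Ioi 1, b r) ^ (n + 1) := by rw [integral_mul_const, pow_succ]; ring

lemma norm_rtilde_ofReal_mul_I (s : ℝ) : ‖rtilde (s * I)‖ = 1 := by
  have h3 := Real.sq_sqrt (show (0 : ℝ) ≤ 3 by norm_num)
  have hsq : ((s : ℂ) * I) ^ 2 = -((s ^ 2 : ℝ) : ℂ) := by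
    rw [mul_pow, I_sq]; push_cast; ring
  have hnum : normSq (ω ^ 2 - (s * I) ^ 2) = s ^ 4 - s ^ 2 + 1 := by
    rw [hsq, normSq_apply]
    simp only [sub_re, sub_im, neg_re, neg_im, ofReal_re, ofReal_im, omega_sq_re, omega_sq_im]
    linear_combination (1 / 4 : ℝ) * h3
  have hden : normSq (1 - ω ^ 2 * (s * I) ^ 2) = s ^ 4 - s ^ 2 + 1 := by
    rw [hsq, normSq_apply]
    simp only [sub_re, sub_im, mul_re, mul_im, neg_re, neg_im, ofReal_re, ofReal_im, one_re,
      one_im, omega_sq_re, omega_sq_im]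
    linear_combination (s ^ 4 / 4 : ℝ) * h3
  have hpos : 0 < s ^ 4 - s ^ 2 + 1 := by nlinarith [sq_nonneg (s ^ 2 - 1)]
  rw [rtilde, norm_div, norm_def, norm_def, hnum, hden, div_self (Real.sqrt_pos.2 hpos).ne']

lemma norm_ftilde0_ofReal_mul_I_le (f₁ : ℂ → ℂ) (s : ℝ) :
    ‖ftilde0 f₁ (s * I)‖ ≤ ‖f₁ (I / |s|)‖ := by
  rcases lt_or_ge 0 s with hs | hs
  · rw [ftilde0, if_pos (by simpa using hs), norm_mul, norm_rtilde_ofReal_mul_I, one_mul,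
      RCLike.norm_conj, abs_of_pos hs, map_mul, conj_ofReal, conj_I, one_div, mul_inv, inv_neg,
      inv_I, neg_neg, inv_mul_eq_div]
  · rw [ftilde0, if_neg (by simpa using hs), abs_of_nonpos hs, one_div, mul_inv, inv_I]
    exact le_of_eq (by push_cast; ring_nf)

lemma norm_exp_mul_add_mul_sq_le_one {w : ℂ} (hw : w.re = 0) (a b : ℝ) (hb : 0 ≤ b) :
    ‖exp (a * w + b * w ^ 2)‖ ≤ 1 := by
  rw [norm_exp, Real.exp_le_one_iff]
  simp only [add_re, mul_re, mul_im, sq, ofReal_re, ofReal_im, hw]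
  nlinarith [sq_nonneg w.im]

lemma sqrt_three_div_two_mul_abs_le_norm (s σ : ℝ) :
    √3 / 2 * |s| ≤ ‖ω ^ 2 * (s * e₁) - σ * e₁‖ := by
  rw [show ω ^ 2 * (s * e₁) - σ * e₁ = (s * ω ^ 2 - σ) * e₁ by ring, norm_mul, norm_e₁, mul_one]
  refine le_trans (le_of_eq ?_) (abs_im_le_norm _)
  simp only [sub_im, mul_im, ofReal_re, ofReal_im, omega_sq_im, omega_sq_re]
  rw [zero_mul, add_zero, sub_zero, abs_mul, abs_neg, abs_of_pos (by positivity : 0 < √3 / 2),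
    mul_comm]

lemma norm_cauchy_kernel_sub_le {s σ : ℝ} (hs : 2 ≤ |s|) (hσ : 2 ≤ |σ|) :
    ‖ω ^ 2 / (ω ^ 2 * (s * e₁) - σ * e₁) - ω / (s * e₁) ^ 2 / (1 / (ω ^ 2 * (s * e₁)) - σ * e₁)‖
      ≤ 3 / |s| := by
  have hs₀ : 0 < |s| := by linarith
  have hsqrt3 : 1 ≤ √3 := Real.one_le_sqrt.2 (by norm_num)
  have hfirst : ‖ω ^ 2 / (ω ^ 2 * (s * e₁) - σ * e₁)‖ ≤ 2 / |s| := by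
    have hd := sqrt_three_div_two_mul_abs_le_norm s σ
    rw [norm_div, norm_pow, norm_omega, one_pow, div_le_div_iff₀ (by nlinarith) hs₀]
    nlinarith
  have hinv : ‖1 / (ω ^ 2 * (s * e₁))‖ = 1 / |s| := by
    rw [norm_div, norm_one, norm_mul, norm_pow, norm_omega, one_pow, one_mul, norm_ofReal_mul_e₁]
  have hd : 3 / 2 ≤ ‖1 / (ω ^ 2 * (s * e₁)) - σ * e₁‖ := by
    have h := norm_sub_norm_le (σ * e₁ : ℂ) (1 / (ω ^ 2 * (s * e₁)))
    rw [norm_sub_rev, norm_ofReal_mul_e₁, hinv] at h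
    have : 1 / |s| ≤ 1 / 2 := one_div_le_one_div_of_le two_pos hs
    linarith
  have hsecond : ‖ω / (s * e₁) ^ 2 / (1 / (ω ^ 2 * (s * e₁)) - σ * e₁)‖ ≤ 1 / |s| := by
    rw [norm_div, norm_div, norm_omega, norm_pow, norm_ofReal_mul_e₁,
      div_le_div_iff₀ (by linarith) hs₀]
    rw [div_mul_eq_mul_div, div_le_iff₀ (by positivity)]
    nlinarith
  calc _ ≤ 2 / |s| + 1 / |s| := (norm_sub_le _ _).trans (add_le_add hfirst hsecond)
    _ = 3 / |s| := by ring

lemma norm_Fker_le {x₀ T x t : ℝ} (f₁ : ℂ → ℂ) (ht : t ∈ Icc 0 T) {k : ℂ} (hk : k ∈ GammatM)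
    {s : ℝ} (hs : 2 ≤ |s|) :
    ‖Fker x₀ T f₁ x t k (s * e₁)‖ ≤ ‖f₁ (I / |s|)‖ / |s| / 2 := by
  obtain ⟨σ, hσ, rfl⟩ := mem_GammatM_iff.1 hk
  have hE₁₂ : ‖exp (((x - x₀ : ℝ) : ℂ) / 2 * (s * I))‖ *
      ‖exp (((T - t : ℝ) : ℂ) / 4 * (s * I) ^ 2)‖ ≤ 1 := by
    rw [← norm_mul, ← exp_add]
    exact_mod_cast norm_exp_mul_add_mul_sq_le_one (by simp) ((x - x₀) / 2) ((T - t) / 4)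
      (by linarith [ht.2])
  have hE₃ : ‖exp (-((x : ℂ) / 2) * (1 / (s * I)) + (t : ℂ) / 4 * (1 / (s * I)) ^ 2)‖ ≤ 1 := by
    exact_mod_cast norm_exp_mul_add_mul_sq_le_one (by simp) (-(x / 2)) (t / 4) (by linarith [ht.1])
  have hR := norm_cauchy_kernel_sub_le hs (le_of_lt hσ)
  have hf := norm_ftilde0_ofReal_mul_I_le f₁ s
  have h2π : ‖2 * (Real.pi : ℂ) * I‖ = 2 * Real.pi := by simp [Real.pi_pos.le]
  have hs₀ : 0 < |s| := by linarith
  have hπ : 3 / (2 * Real.pi) ≤ 1 / 2 := by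
    rw [div_le_div_iff₀ (by positivity) two_pos]; linarith [Real.pi_gt_three]
  rw [Fker, omega_mul_ofReal_mul_e₁, norm_mul, norm_mul, norm_div, norm_mul, h2π]
  calc _ ≤ 1 * (3 / |s|) * (‖f₁ (I / |s|)‖ * 1 / (2 * Real.pi)) := by
        gcongr
        rw [norm_mul]
        gcongr
    _ = 3 / (2 * Real.pi) * (‖f₁ (I / |s|)‖ / |s|) := by ring
    _ ≤ 1 / 2 * (‖f₁ (I / |s|)‖ / |s|) := by gcongr
    _ = ‖f₁ (I / |s|)‖ / |s| / 2 := by ring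

lemma Fker_eq_zero {x₀ T x t : ℝ} {f₁ : ℂ → ℂ}
    (hvanish : ∀ y ∈ Icc (1 / 2 : ℝ) 1, f₁ (I * (y : ℂ)) = 0) (k : ℂ) {s : ℝ}
    (hs₁ : 1 < |s|) (hs₂ : |s| ≤ 2) : Fker x₀ T f₁ x t k (s * e₁) = 0 := by
  have hf₁ : f₁ (I / |s|) = 0 := by
    have h := hvanish |s|⁻¹ ⟨by rw [one_div]; exact inv_anti₀ (by linarith) hs₂,
      inv_le_one_of_one_le₀ hs₁.le⟩
    rwa [ofReal_inv, ← div_eq_mul_inv] at h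
  have hf := norm_ftilde0_ofReal_mul_I_le f₁ s
  rw [hf₁, norm_zero, norm_le_zero_iff] at hf
  simp [Fker, omega_mul_ofReal_mul_e₁, hf]

end Paper

theorem statement_8_general (x₀ T M : ℝ) (f₁ : ℂ → ℂ)
    (hvanish : ∀ y ∈ Set.Icc (1 / 2 : ℝ) 1, f₁ (Complex.I * (y : ℂ)) = 0)
    (hL1 : IntegrableOn (fun y : ℝ => ‖f₁ (Complex.I / (y : ℂ))‖ / y) (Set.Ioi 1))
    (hL1le : ∫ y in Set.Ioi (1 : ℝ), ‖f₁ (Complex.I / (y : ℂ))‖ / y ≤ 1 / M)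
    (j : ℕ) (x t : ℝ) (ht : t ∈ Set.Icc (0 : ℝ) T)
    (k : ℂ) (hk : k ∈ GammatM) :
    ‖mSeq (Fker x₀ T f₁ x t) j k‖ ≤ M ^ (-(j : ℤ)) := by
  set b : ℝ → ℝ := fun y => ‖f₁ (Complex.I / (y : ℂ))‖ / y / 2
  have hb₀ : ∀ y > 1, 0 ≤ b y := fun y hy => by positivity
  have hb : 2 * ∫ y in Set.Ioi 1, b y ≤ 1 / M := by
    simp only [b]
    rw [integral_div]
    linarith
  calc ‖mSeq (Fker x₀ T f₁ x t) j k‖ ≤ (2 * ∫ y in Set.Ioi 1, b y) ^ j :=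
        norm_mSeq_le (hL1.div_const 2) hb₀ (fun _ hk' _ hs => norm_Fker_le f₁ ht hk' hs.le)
          (fun k _ hs₁ hs₂ => Fker_eq_zero hvanish k hs₁ hs₂) j k hk
    _ ≤ (1 / M) ^ j := pow_le_pow_left₀
        (mul_nonneg zero_le_two (setIntegral_nonneg measurableSet_Ioi hb₀)) hb j
    _ = M ^ (-(j : ℤ)) := by rw [zpow_neg, zpow_natCast, one_div, inv_pow]

/-- Inequality (4.32): `sup_{k ∈ Γ̃_m} |m_j(x,t,k)| ≤ M^{-j}` for all `j ≥ 1`, `x ∈ ℝ` and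
`t ∈ [0,T]`. -/
theorem statement_8 (x₀ T M : ℝ) (hT : 0 < T) (hM : 2 ≤ M) (f₁ : ℂ → ℂ)
    (hsmooth : ContDiffOn ℝ (⊤ : ℕ∞) (fun y : ℝ => f₁ (Complex.I * (y : ℂ))) (Set.Ioo (0 : ℝ) 1))
    (hvanish : ∀ y ∈ Set.Icc (1 / 2 : ℝ) 1, f₁ (Complex.I * (y : ℂ)) = 0)
    (hL1 : IntegrableOn (fun y : ℝ => ‖f₁ (Complex.I / (y : ℂ))‖ / y) (Set.Ioi 1))
    (hL1le : ∫ y in Set.Ioi (1 : ℝ), ‖f₁ (Complex.I / (y : ℂ))‖ / y ≤ 1 / M)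
    (j : ℕ) (hj : 1 ≤ j) (x t : ℝ) (ht : t ∈ Set.Icc (0 : ℝ) T)
    (k : ℂ) (hk : k ∈ GammatM) :
    ‖mSeq (Fker x₀ T f₁ x t) j k‖ ≤ M ^ (-(j : ℤ)) :=
  statement_8_general x₀ T M f₁ hvanish hL1 hL1le j x t ht k hk
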